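/- Let N ≥ 2 be an integer, b ∈ ℝ², and let f : ℝ² → ℝ be continuously differentiable. Let h(ξ) = |ξ + b|². Then the polygon–polygon operator commutes with the rotation generator {h, ·}: for every ξ ∈ ℝ², Σ_{l=1}^{N−1} {h, f}(Q_l ξ + (Q_l − I) b) = {h, Q̃_b f}(ξ), i.e. Q̃_b({|T_b ·|², f}) = {|T_b ·|², Q̃_b f} pointwise. -/

import Mathlib

open Real Finset

/-- The Poisson bracket `{g, f} = ∂₁g ∂₂f - ∂₂g ∂₁f` on the plane identified with `ℂ`,
where `∂₁` (resp. `∂₂`) is the derivative in the direction `1` (resp. `I`). -/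
noncomputable def pb (g f : ℂ → ℝ) (x : ℂ) : ℝ :=
  fderiv ℝ g x 1 * fderiv ℝ f x Complex.I - fderiv ℝ g x Complex.I * fderiv ℝ f x 1

/-- The polygon–polygon operator `(Q̃_b f)(ξ) = ∑_{l=1}^{N-1} f(Q_l ξ + (Q_l - I) b)`,
where the rotation `Q_l` by angle `2πl/N` is multiplication by `exp(2πi/N)^l`. -/
noncomputable def Qop (N : ℕ) (b : ℂ) (f : ℂ → ℝ) (ξ : ℂ) : ℝ :=
  ∑ l ∈ Finset.Ico 1 N,
    f ((Complex.exp (2 * π * Complex.I / N)) ^ l * ξ +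
        ((Complex.exp (2 * π * Complex.I / N)) ^ l - 1) * b)

/-! The bracket `{|· + b|², f}(x)` is `2 Df(x)(i(x + b))`: the derivative of `f` along the field
generating rotations about `-b`. That field is carried to itself by every complex homothety
`η ↦ aη + (a - 1)b` about `-b`, so the bracket commutes with composition by each such map, and
hence with the sum `Q̃_b` of them. -/

theorem fderiv_sq_norm_add_const_apply {E : Type*} [NormedAddCommGroup E] [InnerProductSpace ℝ E]
    (b x v : E) : fderiv ℝ (fun η : E => ‖η + b‖ ^ 2) x v = 2 * inner ℝ (x + b) v := by
  have h : HasFDerivAt (fun η : E => ‖η + b‖ ^ 2) _ x := ((hasFDerivAt_id x).add_const b).norm_sq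
  rw [h.fderiv]
  simp only [smul_apply, ContinuousLinearMap.comp_id, innerSL_apply_apply, id,
    nsmul_eq_mul, Nat.cast_ofNat]

theorem fderiv_comp_mul_add_apply {F : Type*} [NormedAddCommGroup F] [NormedSpace ℝ F]
    {f : ℂ → F} (a d ξ v : ℂ) (hf : DifferentiableAt ℝ f (a * ξ + d)) :
    fderiv ℝ (fun η => f (a * η + d)) ξ v = fderiv ℝ f (a * ξ + d) (a * v) := by
  have haff : HasFDerivAt (fun η : ℂ => a * η + d) (a • ContinuousLinearMap.id ℝ ℂ) ξ :=
    ((hasFDerivAt_id ξ).const_mul a).add_const d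
  have h : HasFDerivAt (fun η => f (a * η + d)) _ ξ := hf.hasFDerivAt.comp ξ haff
  rw [h.fderiv]
  simp

theorem pb_sum {ι : Type*} (g : ℂ → ℝ) (s : Finset ι) (F : ι → ℂ → ℝ) (x : ℂ)
    (hF : ∀ i ∈ s, DifferentiableAt ℝ (F i) x) :
    pb g (fun y => ∑ i ∈ s, F i y) x = ∑ i ∈ s, pb g (F i) x := by
  simp only [pb, fderiv_fun_sum hF, _root_.sum_apply, mul_sum, ← sum_sub_distrib]

open Complex in
theorem pb_sq_norm_add_const (b : ℂ) (f : ℂ → ℝ) (x : ℂ) :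
    pb (fun η => ‖η + b‖ ^ 2) f x = 2 * fderiv ℝ f x (I * (x + b)) := by
  have hrot : I * (x + b) = (x + b).re • I - (x + b).im • (1 : ℂ) := by
    apply Complex.ext <;> simp
  rw [pb, fderiv_sq_norm_add_const_apply, fderiv_sq_norm_add_const_apply, hrot, map_sub,
    map_smul, map_smul, Complex.inner, Complex.inner]
  simp only [one_mul, conj_re, conj_im, smul_eq_mul, mul_re, I_re, I_im]
  ring

theorem pb_sq_norm_add_const_comp_homothety (b a ξ : ℂ) {f : ℂ → ℝ}
    (hf : DifferentiableAt ℝ f (a * ξ + (a - 1) * b)) :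
    pb (fun η => ‖η + b‖ ^ 2) (fun η => f (a * η + (a - 1) * b)) ξ =
      pb (fun η => ‖η + b‖ ^ 2) f (a * ξ + (a - 1) * b) := by
  have hcenter : a * ξ + (a - 1) * b + b = a * (ξ + b) := by ring
  rw [pb_sq_norm_add_const, pb_sq_norm_add_const, fderiv_comp_mul_add_apply _ _ _ _ hf, hcenter,
    mul_left_comm]

theorem Qop_commutes_with_shifted_rotation_generator_general
    (N : ℕ) (b : ℂ) (f : ℂ → ℝ) (hf : ContDiff ℝ 1 f) :
    ∀ ξ : ℂ,
      (∑ l ∈ Finset.Ico 1 N,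
        pb (fun η => ‖η + b‖ ^ 2) f
          ((Complex.exp (2 * π * Complex.I / N)) ^ l * ξ +
            ((Complex.exp (2 * π * Complex.I / N)) ^ l - 1) * b)) =
      pb (fun η => ‖η + b‖ ^ 2) (Qop N b f) ξ := by
  intro ξ
  have hfd : Differentiable ℝ f := hf.differentiable one_ne_zero
  unfold Qop
  rw [pb_sum]
  · exact sum_congr rfl fun l _ => (pb_sq_norm_add_const_comp_homothety b _ ξ (hfd _)).symm
  · intro l _
    exact (hfd _).comp ξ ((differentiableAt_id.const_mul _).add_const _)

/-- The polygon–polygon operator commutes with the rotation generator `{|T_b ·|², ·}`: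
`Q̃_b({|T_b ·|², f}) = {|T_b ·|², Q̃_b f}` pointwise, for `f` of class `C¹`. -/
theorem Qop_commutes_with_shifted_rotation_generator
    (N : ℕ) (hN : 2 ≤ N) (b : ℂ) (f : ℂ → ℝ) (hf : ContDiff ℝ 1 f) :
    ∀ ξ : ℂ,
      (∑ l ∈ Finset.Ico 1 N,
        pb (fun η => ‖η + b‖ ^ 2) f
          ((Complex.exp (2 * π * Complex.I / N)) ^ l * ξ +
            ((Complex.exp (2 * π * Complex.I / N)) ^ l - 1) * b)) =
      pb (fun η => ‖η + b‖ ^ 2) (Qop N b f) ξ :=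
  Qop_commutes_with_shifted_rotation_generator_general N b f hf
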